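/- arXiv:0806.3153 — 7 statements merged into one kernel-verified Lean document; each statement's English description precedes it below -/
import Mathlib

section
/- Let F be a field and let R be the ring of ternions over F. Every right ideal of R is equal to one of the following: the zero ideal, R itself, the two-sided ideal I₁ of ternions with zero first column, the two-sided ideal I₂ of ternions with zero second row, or I₁(b:c) = { (0 zb; 0 zc) : z ∈ F } for some pair (b,c) ∈ F² with (b,c) ≠ (0,0). -/
set_option synthInstance.maxHeartbeats 1000000
set_option maxHeartbeats 1000000

/-- The ring of ternions over a field `F`: the subring of `2×2` matrices over `F`
consisting of all upper triangular matrices. -/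
def ternions (F : Type) [Field F] : Subring (Matrix (Fin 2) (Fin 2) F) where
  carrier := {A | A 1 0 = 0}
  zero_mem' := by simp
  one_mem' := by simp [Matrix.one_apply]
  add_mem' := by
    intro a b ha hb
    simp only [Set.mem_setOf_eq, Matrix.add_apply] at *
    simp [ha, hb]
  neg_mem' := by
    intro a ha
    simp only [Set.mem_setOf_eq, Matrix.neg_apply] at *
    simp [ha]
  mul_mem' := by
    intro a b ha hb
    simp only [Set.mem_setOf_eq, Matrix.mul_apply, Fin.sum_univ_two] at *
    simp [ha, hb]


variable {F : Type} [Field F]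

def tm (a b c : F) : ternions F :=
  ⟨!![a, b; 0, c], by show !![a, b; 0, c] 1 0 = 0; simp⟩

lemma tm_val00 (a b c : F) : (tm a b c).val 0 0 = a := by simp [tm]
lemma tm_val01 (a b c : F) : (tm a b c).val 0 1 = b := by simp [tm]
lemma tm_val11 (a b c : F) : (tm a b c).val 1 1 = c := by simp [tm]

lemma tm_eq (A : ternions F) : A = tm (A.val 0 0) (A.val 0 1) (A.val 1 1) := by
  apply Subtype.ext
  ext i j
  fin_cases i <;> fin_cases j <;> simp [tm]
  exact A.2

lemma tm_mul (a b c p q r : F) :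
    tm a b c * tm p q r = tm (a*p) (a*q + b*r) (c*r) := by
  apply Subtype.ext
  have h : ((tm a b c * tm p q r : ternions F) : Matrix (Fin 2) (Fin 2) F)
      = (tm a b c).val * (tm p q r).val := rfl
  rw [h]
  ext i j
  fin_cases i <;> fin_cases j <;>
    simp [Matrix.mul_apply, Fin.sum_univ_two, tm]

lemma tm_add (a b c p q r : F) : tm a b c + tm p q r = tm (a+p) (b+q) (c+r) := by
  apply Subtype.ext
  show (tm a b c).val + (tm p q r).val = _
  ext i j
  fin_cases i <;> fin_cases j <;> simp [tm]

lemma tm_sub (a b c p q r : F) : tm a b c - tm p q r = tm (a-p) (b-q) (c-r) := by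
  apply Subtype.ext
  show (tm a b c).val - (tm p q r).val = _
  ext i j
  fin_cases i <;> fin_cases j <;> simp [tm]

lemma tm_one : (1 : ternions F) = tm 1 0 1 := by
  apply Subtype.ext
  ext i j
  fin_cases i <;> fin_cases j <;> simp [tm, Matrix.one_apply]

lemma tm_zero : (0 : ternions F) = tm 0 0 0 := by
  apply Subtype.ext
  ext i j
  fin_cases i <;> fin_cases j <;> simp [tm]

lemma mul_mem_right' {J : Submodule (ternions F)ᵐᵒᵖ (ternions F)} {A : ternions F}
    (hA : A ∈ J) (B : ternions F) : A * B ∈ J := by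
  have := J.smul_mem (MulOpposite.op B) hA
  simpa [MulOpposite.smul_eq_mul_unop] using this


/-- Every right ideal of the ring of ternions is `0`, the whole ring, `I₁` (zero first
column), `I₂` (zero second row), or `I₁(b:c) = { (0 zb; 0 zc) : z ∈ F }` for some
`(b,c) ≠ (0,0)`.  Right ideals are formalized as submodules of `R` over `Rᵐᵒᵖ`. -/
theorem ternion_rightIdeals (F : Type) [Field F]
    (J : Submodule (ternions F)ᵐᵒᵖ (ternions F)) :
    (J : Set (ternions F)) = {0} ∨
    (J : Set (ternions F)) = Set.univ ∨
    (J : Set (ternions F)) = {A : ternions F | A.val 0 0 = 0} ∨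
    (J : Set (ternions F)) = {A : ternions F | A.val 1 1 = 0} ∨
    (∃ b c : F, (b, c) ≠ (0, 0) ∧
      (J : Set (ternions F)) =
        {A : ternions F | A.val 0 0 = 0 ∧ ∃ z : F, A.val 0 1 = z * b ∧ A.val 1 1 = z * c}) := by
  classical
  by_cases h1 : ∃ A ∈ J, A.val 0 0 ≠ 0
  · -- I₂ ⊆ J
    obtain ⟨A, hAJ, hA⟩ := h1
    have key : A * tm (A.val 0 0)⁻¹ 0 0 = tm 1 0 0 := by
      conv_lhs => rw [tm_eq A]
      rw [tm_mul, tm_val00, mul_inv_cancel₀ hA]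
      norm_num
    have hE00 : tm (1:F) 0 0 ∈ J := key ▸ mul_mem_right' hAJ _
    have hI2 : ∀ p q : F, tm p q 0 ∈ J := by
      intro p q
      have h := mul_mem_right' hE00 (tm p q 0)
      rw [tm_mul] at h
      have e : tm (1*p) (1*q + 0*0) ((0:F)*0) = tm p q 0 := by norm_num
      rwa [e] at h
    by_cases h2 : ∃ B ∈ J, B.val 1 1 ≠ 0
    · -- J = R
      right; left
      obtain ⟨B, hBJ, hB⟩ := h2
      have hsub : B - tm (B.val 0 0) (B.val 0 1) 0 ∈ J :=
        J.sub_mem hBJ (hI2 _ _)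
      have e : B - tm (B.val 0 0) (B.val 0 1) 0 = tm 0 0 (B.val 1 1) := by
        conv_lhs => rw [tm_eq B]
        rw [tm_sub, tm_val00, tm_val01]; norm_num
      rw [e] at hsub
      have hE11 : tm (0:F) 0 1 ∈ J := by
        have h := mul_mem_right' hsub (tm 0 0 (B.val 1 1)⁻¹)
        rw [tm_mul] at h
        have e2 : tm ((0:F)*0) (0*0 + 0*(B.val 1 1)⁻¹) (B.val 1 1 * (B.val 1 1)⁻¹)
            = tm 0 0 1 := by
          rw [mul_inv_cancel₀ hB]; norm_num
        rwa [e2] at h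
      have hone : (1 : ternions F) ∈ J := by
        rw [tm_one]
        have := J.add_mem (hI2 1 0) hE11
        rwa [tm_add, add_zero, add_zero, zero_add] at this
      apply Set.eq_univ_iff_forall.mpr
      intro X
      have := mul_mem_right' hone X
      rwa [one_mul] at this
    · -- J = I₂
      right; right; right; left
      push_neg at h2
      ext X
      simp only [SetLike.mem_coe, Set.mem_setOf_eq]
      constructor
      · exact h2 X
      · intro hX
        have : X = tm (X.val 0 0) (X.val 0 1) 0 := by
          rw [tm_eq X, hX]; simp [tm_val00, tm_val01]
        rw [this]; exact hI2 _ _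
  · push_neg at h1
    by_cases h0 : ∀ A ∈ J, A = (0 : ternions F)
    · left
      ext X
      simp only [SetLike.mem_coe, Set.mem_singleton_iff]
      exact ⟨h0 X, fun h => h ▸ J.zero_mem⟩
    · push_neg at h0
      obtain ⟨A, hAJ, hA0⟩ := h0
      set b := A.val 0 1 with hb
      set c := A.val 1 1 with hc
      have hAeq : A = tm 0 b c := by rw [tm_eq A, h1 A hAJ]
      have hbc : (b, c) ≠ ((0:F), (0:F)) := by
        intro h
        rw [Prod.mk.injEq] at h
        apply hA0
        rw [hAeq, h.1, h.2, ← tm_zero]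
      have hscale : ∀ z : F, tm 0 (b*z) (c*z) ∈ J := by
        intro z
        have h := mul_mem_right' hAJ (tm 0 0 z)
        rw [hAeq, tm_mul] at h
        have e : tm ((0:F)*0) (0*0 + b*z) (c*z) = tm 0 (b*z) (c*z) := by norm_num
        rwa [e] at h
      by_cases h3 : ∃ B ∈ J, b * B.val 1 1 - c * B.val 0 1 ≠ 0
      · -- J = I₁
        right; right; left
        obtain ⟨B, hBJ, hB⟩ := h3
        set b' := B.val 0 1 with hb'
        set c' := B.val 1 1 with hc'
        have hBeq : B = tm 0 b' c' := by rw [tm_eq B, h1 B hBJ]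
        set d := b * c' - c * b' with hd
        have hd0 : d ≠ 0 := hB
        have hBscale : ∀ z : F, tm 0 (b'*z) (c'*z) ∈ J := by
          intro z
          have h := mul_mem_right' hBJ (tm 0 0 z)
          rw [hBeq, tm_mul] at h
          have e : tm ((0:F)*0) (0*0 + b'*z) (c'*z) = tm 0 (b'*z) (c'*z) := by norm_num
          rwa [e] at h
        ext X
        simp only [SetLike.mem_coe, Set.mem_setOf_eq]
        constructor
        · exact h1 X
        · intro hX
          set y := X.val 0 1 with hy
          set z := X.val 1 1 with hz
          have hXeq : X = tm 0 y z := by rw [tm_eq X, hX]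
          set s := (y * c' - z * b') / d with hs
          set t := (z * b - y * c) / d with ht
          have hsum : tm 0 (b*s) (c*s) + tm 0 (b'*t) (c'*t) = tm 0 y z := by
            rw [tm_add, add_zero]
            have e1 : b*s + b'*t = y := by
              rw [hs, ht]; field_simp; ring
            have e2 : c*s + c'*t = z := by
              rw [hs, ht]; field_simp; ring
            rw [e1, e2]
          rw [hXeq, ← hsum]
          exact J.add_mem (hscale s) (hBscale t)
      · -- J = I₁(b:c)
        right; right; right; right
        push_neg at h3
        refine ⟨b, c, hbc, ?_⟩
        ext X
        simp only [SetLike.mem_coe, Set.mem_setOf_eq]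
        constructor
        · intro hXJ
          refine ⟨h1 X hXJ, ?_⟩
          have hrel := h3 X hXJ
          by_cases hbz : b = 0
          · have hcz : c ≠ 0 := by
              intro hczz; exact hbc (by rw [hbz, hczz])
            refine ⟨X.val 1 1 / c, ?_, ?_⟩
            · have hc0 : c * X.val 0 1 = 0 := by
                linear_combination (X.val 1 1) * hbz - hrel
              rw [hbz, mul_zero]
              exact (mul_eq_zero.mp hc0).resolve_left hcz
            · field_simp
          · refine ⟨X.val 0 1 / b, ?_, ?_⟩
            · field_simp
            · field_simp
              linear_combination hrel
        · rintro ⟨hX0, z, hX1, hX2⟩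
          have hXeq : X = tm 0 (b*z) (c*z) := by
            rw [tm_eq X, hX0, hX1, hX2, mul_comm z b, mul_comm z c]
          rw [hXeq]
          exact hscale z
end

section
/- Let F be a field and let R be the ring of ternions over F. Every left ideal of R is equal to one of the following: the zero ideal, R itself, the two-sided ideal I₁ of ternions with zero first column, the two-sided ideal I₂ of ternions with zero second row, or I₂(a:b) = { (xa xb; 0 0) : x ∈ F } for some pair (a,b) ∈ F² with (a,b) ≠ (0,0). -/
set_option synthInstance.maxHeartbeats 1000000
set_option maxHeartbeats 1000000

/-! Left multiplication by `(x 0; 0 0)` sends a left ideal `J` into itself and keeps only first rows,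
so the first rows of elements of `J` form a subspace `V` of `F²`, and `(p q; 0 0) ∈ J` iff
`(p, q) ∈ V`. If some element of `J` has a nonzero `(1,1)` entry `r`, multiplying it on the left by
`(0 y/r; 0 z/r)` gives all of `I₁ ⊆ J`; then either `J = I₁`, or `J` contains an element with
nonzero `(0,0)` entry and hence, modulo `I₁`, the identity. Otherwise `J ⊆ I₂` is the preimage of
`V`, which is `F²` or a line `F·(a, b)` (the zero line giving `J = 0`). -/

theorem Submodule.eq_top_or_exists_eq_span_singleton_of_finrank_eq_two {K E : Type*}
    [DivisionRing K] [AddCommGroup E] [Module K E] [FiniteDimensional K E]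
    (h : Module.finrank K E = 2) (V : Submodule K E) : V = ⊤ ∨ ∃ v, V = K ∙ v := by
  refine or_iff_not_imp_left.2 fun hV ↦ ?_
  have := Submodule.finrank_lt hV
  obtain ⟨v, hv⟩ := V.finrank_le_one_iff_isPrincipal.1 (by omega)
  exact ⟨v, hv⟩

namespace ternions

variable {F : Type} [Field F]

def mk (x y z : F) : ternions F :=
  ⟨!![x, y; 0, z], show !![x, y; (0 : F), z] 1 0 = 0 from rfl⟩

@[simp] lemma val_mk_zero_zero (x y z : F) : (mk x y z).val 0 0 = x := by simp [mk]
@[simp] lemma val_mk_zero_one (x y z : F) : (mk x y z).val 0 1 = y := by simp [mk]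
@[simp] lemma val_mk_one_one (x y z : F) : (mk x y z).val 1 1 = z := by simp [mk]

lemma val_one_zero (A : ternions F) : A.val 1 0 = 0 := A.2

@[ext] lemma ext {A B : ternions F} (h₀₀ : A.val 0 0 = B.val 0 0) (h₀₁ : A.val 0 1 = B.val 0 1)
    (h₁₁ : A.val 1 1 = B.val 1 1) : A = B := by
  apply Subtype.ext
  ext i j
  fin_cases i <;> fin_cases j <;> simp [*, val_one_zero]

lemma mk_eta (A : ternions F) : mk (A.val 0 0) (A.val 0 1) (A.val 1 1) = A := by
  ext <;> simp

lemma mk_mul (p q r : F) (A : ternions F) :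
    mk p q r * A = mk (p * A.val 0 0) (p * A.val 0 1 + q * A.val 1 1) (r * A.val 1 1) := by
  ext <;> simp [mk, Matrix.mul_apply, Fin.sum_univ_two, val_one_zero]

lemma mk_add (p q r x y z : F) : mk p q r + mk x y z = mk (p + x) (q + y) (r + z) := by
  ext <;> simp [mk]

lemma mk_one : (mk 1 0 1 : ternions F) = 1 := by
  ext <;> simp

lemma mk_zero : (mk 0 0 0 : ternions F) = 0 := by
  ext <;> simp

variable {J : Ideal (ternions F)} {A : ternions F}

lemma mk_mem_of_mem (hA : A ∈ J) : mk (A.val 0 0) (A.val 0 1) 0 ∈ J := by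
  simpa [mk_mul, mk_eta] using J.mul_mem_left (mk 1 0 0) hA

lemma mk_zero_mem_of_mem (hA : A ∈ J) (hA₁₁ : A.val 1 1 ≠ 0) (y z : F) : mk 0 y z ∈ J := by
  have h := J.mul_mem_left (mk 0 (y / A.val 1 1) (z / A.val 1 1)) hA
  rwa [mk_mul, div_mul_cancel₀ _ hA₁₁, div_mul_cancel₀ _ hA₁₁, zero_mul, zero_mul, zero_add] at h

lemma eq_top_of_mem (hI₁ : ∀ y z, mk 0 y z ∈ J) (hA : A ∈ J) (hA₀₀ : A.val 0 0 ≠ 0) : J = ⊤ := by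
  have hrow : mk 1 ((A.val 0 0)⁻¹ * A.val 0 1) 0 ∈ J := by
    simpa [mk_mul, inv_mul_cancel₀ hA₀₀] using J.mul_mem_left (mk (A.val 0 0)⁻¹ 0 0) hA
  have hone := J.add_mem hrow (hI₁ (-((A.val 0 0)⁻¹ * A.val 0 1)) 1)
  rw [mk_add, add_neg_cancel, zero_add, add_zero, mk_one] at hone
  exact (Ideal.eq_top_iff_one J).2 hone

variable (J) in
def rowSpace : Submodule F (F × F) where
  carrier := {v | mk v.1 v.2 0 ∈ J}
  add_mem' {v w} hv hw := by simpa [mk_add] using J.add_mem hv hw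
  zero_mem' := by simp [mk_zero]
  smul_mem' c v hv := by simpa [mk_mul] using J.mul_mem_left (mk c 0 0) hv

@[simp] lemma mem_rowSpace {v : F × F} : v ∈ rowSpace J ↔ mk v.1 v.2 0 ∈ J := Iff.rfl

lemma mem_iff_of_forall_val_one_one_eq_zero (hJ : ∀ B ∈ J, B.val 1 1 = 0) :
    A ∈ J ↔ A.val 1 1 = 0 ∧ (A.val 0 0, A.val 0 1) ∈ rowSpace J := by
  refine ⟨fun hA ↦ ⟨hJ A hA, mk_mem_of_mem hA⟩, fun ⟨hA₁₁, hA⟩ ↦ ?_⟩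
  rwa [← mk_eta A, hA₁₁]

lemma leftIdeal_cases_of_val_one_one_ne_zero (hA : A ∈ J) (hA₁₁ : A.val 1 1 ≠ 0) :
    (J : Set (ternions F)) = Set.univ ∨ (J : Set (ternions F)) = {B | B.val 0 0 = 0} := by
  have hI₁ := mk_zero_mem_of_mem hA hA₁₁
  by_cases h : ∃ B ∈ J, B.val 0 0 ≠ 0
  · obtain ⟨B, hB, hB₀₀⟩ := h
    left
    simp [eq_top_of_mem hI₁ hB hB₀₀]
  · push Not at h
    right
    ext B
    refine ⟨h B, fun hB₀₀ ↦ ?_⟩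
    rw [SetLike.mem_coe]
    convert hI₁ (B.val 0 1) (B.val 1 1)
    ext <;> simp [show B.val 0 0 = 0 from hB₀₀]

lemma leftIdeal_cases_of_forall_val_one_one_eq_zero (hJ : ∀ B ∈ J, B.val 1 1 = 0) :
    (J : Set (ternions F)) = {0} ∨
    (J : Set (ternions F)) = {B : ternions F | B.val 1 1 = 0} ∨
    (∃ a b : F, (a, b) ≠ (0, 0) ∧
      (J : Set (ternions F)) =
        {B : ternions F | B.val 1 1 = 0 ∧ ∃ x : F, B.val 0 0 = x * a ∧ B.val 0 1 = x * b}) := by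
  have hmem (B : ternions F) := mem_iff_of_forall_val_one_one_eq_zero (A := B) hJ
  rcases (rowSpace J).eq_top_or_exists_eq_span_singleton_of_finrank_eq_two (by simp)
    with hV | ⟨⟨a, b⟩, hV⟩
  · right; left
    ext B
    simp [hmem, hV]
  · rcases eq_or_ne (a, b) 0 with hab | hab
    · left
      ext B
      simp [hmem, hV, hab, ternions.ext_iff]
      tauto
    · right; right
      refine ⟨a, b, hab, ?_⟩
      ext B
      simp [hmem, hV, Submodule.mem_span_singleton, Prod.ext_iff, eq_comm]

end ternions

/-- Every left ideal of the ring of ternions is `0`, the whole ring, `I₁` (zero first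
column), `I₂` (zero second row), or `I₂(a:b) = { (xa xb; 0 0) : x ∈ F }` for some
`(a,b) ≠ (0,0)`. -/
theorem ternion_leftIdeals (F : Type) [Field F] (J : Ideal (ternions F)) :
    (J : Set (ternions F)) = {0} ∨
    (J : Set (ternions F)) = Set.univ ∨
    (J : Set (ternions F)) = {A : ternions F | A.val 0 0 = 0} ∨
    (J : Set (ternions F)) = {A : ternions F | A.val 1 1 = 0} ∨
    (∃ a b : F, (a, b) ≠ (0, 0) ∧
      (J : Set (ternions F)) =
        {A : ternions F | A.val 1 1 = 0 ∧ ∃ x : F, A.val 0 0 = x * a ∧ A.val 0 1 = x * b}) := by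
  by_cases h : ∃ A ∈ J, A.val 1 1 ≠ 0
  · obtain ⟨A, hA, hA₁₁⟩ := h
    rcases ternions.leftIdeal_cases_of_val_one_one_ne_zero hA hA₁₁ with hJ | hJ <;> tauto
  · push Not at h
    rcases ternions.leftIdeal_cases_of_forall_val_one_one_eq_zero h with hJ | hJ | hJ <;> tauto
end

section
/- Let F be a field, R the ring of ternions over F, and n ≥ 1. For a vector X ∈ R^{n+1}, the cyclic submodule R·X is free (i.e., r ↦ r·X is injective) with X non-unimodular if and only if the right ideal I_X generated by the coordinates of X equals the ideal I₁ of ternions with zero first column. -/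
set_option synthInstance.maxHeartbeats 1000000
set_option maxHeartbeats 1000000

/-!
Both conditions only depend on the right ideal `I = I_X`: `R·X` is free iff no nonzero `r`
annihilates `I` from the left, and `X` is unimodular iff `1 ∈ I`. Write ternions as
`(a b; 0 c)`. If `I` has no element with `c ≠ 0`, then `(0 1; 0 0)` annihilates it; if it has
one with `c ≠ 0` and one with `a ≠ 0`, then `I = R`. So if `I ≠ R` has zero left
annihilator, then `I ⊆ I₁`. Inside `I₁`, if all columns `(b, c)` were proportional to that of
some `B` with `c ≠ 0`, then `(c_B, -b_B; 0 0)` would annihilate `I`; hence `I` contains two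
elements with independent columns `(b, c)`, and these generate `I₁` by Cramer's rule.
-/

section RightIdeal
variable {R ι : Type*} [Ring R]

theorem smul_eq_zero_iff_forall_mem_span (r : R) (X : ι → R) :
    r • X = 0 ↔ ∀ A ∈ Submodule.span Rᵐᵒᵖ (Set.range X), r * A = 0 := by
  constructor
  · intro h A hA
    induction hA using Submodule.span_induction with
    | mem x hx => obtain ⟨k, rfl⟩ := hx; exact congrFun h k
    | zero => exact mul_zero r
    | add x y _ _ hx hy => rw [mul_add, hx, hy, add_zero]
    | smul m x _ hx => rw [MulOpposite.smul_eq_mul_unop, ← mul_assoc, hx, zero_mul]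
  · intro h
    funext k
    exact h _ (Submodule.subset_span ⟨k, rfl⟩)

theorem injective_smul_iff (X : ι → R) :
    Function.Injective (fun r : R => r • X) ↔
      ∀ r : R, (∀ A ∈ Submodule.span Rᵐᵒᵖ (Set.range X), r * A = 0) → r = 0 := by
  simp_rw [← smul_eq_zero_iff_forall_mem_span]
  exact injective_iff_map_eq_zero (LinearMap.toSpanSingleton R _ X)

theorem mem_span_range_iff_exists_linearMap [Fintype ι] (X : ι → R) (A : R) :
    A ∈ Submodule.span Rᵐᵒᵖ (Set.range X) ↔ ∃ φ : (ι → R) →ₗ[R] R, φ X = A := by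
  classical
  rw [Submodule.mem_span_range_iff_exists_fun]
  constructor
  · rintro ⟨c, rfl⟩
    exact ⟨∑ k, (LinearMap.proj k).smulRight (c k).unop, by simp [MulOpposite.smul_eq_mul_unop]⟩
  · rintro ⟨φ, rfl⟩
    refine ⟨fun k => MulOpposite.op (φ fun j => if k = j then 1 else 0), ?_⟩
    simp [LinearMap.pi_apply_eq_sum_univ φ X, MulOpposite.smul_eq_mul_unop]

theorem mul_mem_of_mem {I : Submodule Rᵐᵒᵖ R} {A : R} (hA : A ∈ I) (u : R) : A * u ∈ I :=
  I.smul_mem (MulOpposite.op u) hA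

end RightIdeal

namespace Ternions

variable {F : Type} [Field F]

def mk (p q s : F) : ternions F := ⟨!![p, q; 0, s], rfl⟩

@[simp] theorem mk_val_zero_zero (p q s : F) : (mk p q s).val 0 0 = p := rfl
@[simp] theorem mk_val_zero_one (p q s : F) : (mk p q s).val 0 1 = q := rfl
@[simp] theorem mk_val_one_one (p q s : F) : (mk p q s).val 1 1 = s := rfl

theorem val_one_zero (x : ternions F) : x.val 1 0 = 0 := x.2

@[ext] theorem ext {x y : ternions F} (h00 : x.val 0 0 = y.val 0 0) (h01 : x.val 0 1 = y.val 0 1)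
    (h11 : x.val 1 1 = y.val 1 1) : x = y := by
  apply Subtype.ext
  ext i j
  fin_cases i <;> fin_cases j <;> simp_all [val_one_zero]

@[simp] theorem mul_apply_zero_zero (x y : ternions F) :
    (x.val * y.val) 0 0 = x.val 0 0 * y.val 0 0 := by
  simp [Matrix.mul_apply, val_one_zero y]

@[simp] theorem mul_apply_zero_one (x y : ternions F) :
    (x.val * y.val) 0 1 = x.val 0 0 * y.val 0 1 + x.val 0 1 * y.val 1 1 := by
  simp [Matrix.mul_apply]

@[simp] theorem mul_apply_one_one (x y : ternions F) :
    (x.val * y.val) 1 1 = x.val 1 1 * y.val 1 1 := by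
  simp [Matrix.mul_apply, val_one_zero x]

def firstColumnZero : Submodule (ternions F)ᵐᵒᵖ (ternions F) where
  carrier := {A | A.val 0 0 = 0}
  add_mem' {A B} hA hB := by simp_all
  zero_mem' := rfl
  smul_mem' m A hA := by simp_all [MulOpposite.smul_eq_mul_unop]

theorem mem_firstColumnZero {A : ternions F} : A ∈ firstColumnZero ↔ A.val 0 0 = 0 := Iff.rfl

theorem one_notMem_firstColumnZero : (1 : ternions F) ∉ firstColumnZero := by
  simp [mem_firstColumnZero]

theorem eq_zero_of_forall_mul_firstColumnZero {r : ternions F}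
    (hr : ∀ A ∈ firstColumnZero, r * A = 0) : r = 0 := by
  have h₀₁ := hr (mk 0 1 0) rfl
  have h₁₁ := hr (mk 0 0 1) rfl
  ext
  · simpa using congrArg (fun z => z.val 0 1) h₀₁
  · simpa using congrArg (fun z => z.val 0 1) h₁₁
  · simpa using congrArg (fun z => z.val 1 1) h₁₁

variable {I : Submodule (ternions F)ᵐᵒᵖ (ternions F)}

theorem exists_mem_val_one_one_ne_zero (hI : ∀ r, (∀ A ∈ I, r * A = 0) → r = 0) :
    ∃ B ∈ I, B.val 1 1 ≠ 0 := by
  by_contra! h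
  have := hI (mk 0 1 0) fun A hA => by ext <;> simp [h A hA]
  simpa using congrArg (fun z => z.val 0 1) this

theorem one_mem_of_val_ne_zero {A B : ternions F} (hA : A ∈ I) (hB : B ∈ I)
    (ha : A.val 0 0 ≠ 0) (hc : B.val 1 1 ≠ 0) : (1 : ternions F) ∈ I := by
  have h : A * mk (A.val 0 0)⁻¹ (-((A.val 0 0)⁻¹ * B.val 0 1 * (B.val 1 1)⁻¹)) 0 +
      B * mk 0 0 (B.val 1 1)⁻¹ = 1 := by
    ext
    · simp [ha]
    · simp; field_simp; ring
    · simp [hc]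
  exact h ▸ add_mem (mul_mem_of_mem hA _) (mul_mem_of_mem hB _)

theorem le_firstColumnZero (hI : ∀ r, (∀ A ∈ I, r * A = 0) → r = 0)
    (h1 : (1 : ternions F) ∉ I) : I ≤ firstColumnZero := by
  obtain ⟨B, hB, hc⟩ := exists_mem_val_one_one_ne_zero hI
  intro A hA
  by_contra ha
  exact h1 (one_mem_of_val_ne_zero hA hB ha hc)

theorem firstColumnZero_le_of_det_ne_zero {A B : ternions F} (hA : A ∈ I) (hB : B ∈ I)
    (hA₀ : A.val 0 0 = 0) (hB₀ : B.val 0 0 = 0)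
    (hdet : A.val 0 1 * B.val 1 1 - B.val 0 1 * A.val 1 1 ≠ 0) : firstColumnZero ≤ I := by
  intro T hT
  set d := A.val 0 1 * B.val 1 1 - B.val 0 1 * A.val 1 1
  set s := (T.val 0 1 * B.val 1 1 - T.val 1 1 * B.val 0 1) / d
  set t := (T.val 1 1 * A.val 0 1 - T.val 0 1 * A.val 1 1) / d
  have cramer : A * mk s 0 s + B * mk t 0 t = T := by
    ext
    · simp [hA₀, hB₀, mem_firstColumnZero.mp hT]
    · simp [s, t]; field_simp; ring
    · simp [s, t]; field_simp; ring
  exact cramer ▸ add_mem (mul_mem_of_mem hA _) (mul_mem_of_mem hB _)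

theorem exists_det_ne_zero (hI : ∀ r, (∀ A ∈ I, r * A = 0) → r = 0) (hle : I ≤ firstColumnZero)
    {B : ternions F} (hc : B.val 1 1 ≠ 0) :
    ∃ A ∈ I, A.val 0 1 * B.val 1 1 - B.val 0 1 * A.val 1 1 ≠ 0 := by
  by_contra! h
  have := hI (mk (B.val 1 1) (-B.val 0 1) 0) fun A hA => by
    ext
    · simp [mem_firstColumnZero.mp (hle hA)]
    · simp; linear_combination h A hA
    · simp
  exact hc (by simpa using congrArg (fun z => z.val 0 0) this)

theorem forall_mul_eq_zero_and_one_notMem_iff :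
    ((∀ r, (∀ A ∈ I, r * A = 0) → r = 0) ∧ (1 : ternions F) ∉ I) ↔ I = firstColumnZero := by
  constructor
  · rintro ⟨hI, h1⟩
    have hle := le_firstColumnZero hI h1
    obtain ⟨B, hB, hc⟩ := exists_mem_val_one_one_ne_zero hI
    obtain ⟨A, hA, hdet⟩ := exists_det_ne_zero hI hle hc
    exact le_antisymm hle (firstColumnZero_le_of_det_ne_zero hA hB (hle hA) (hle hB) hdet)
  · rintro rfl
    exact ⟨fun _ => eq_zero_of_forall_mul_firstColumnZero, one_notMem_firstColumnZero⟩

end Ternions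

open Ternions in
theorem ternion_nonUnimodular_free_iff_general (F : Type) [Field F] (n : ℕ)
    (X : Fin (n + 1) → ternions F) :
    (Function.Injective (fun r : ternions F => r • X) ∧
      ¬ ∃ φ : (Fin (n + 1) → ternions F) →ₗ[ternions F] ternions F, φ X = 1) ↔
      (Submodule.span (ternions F)ᵐᵒᵖ (Set.range X) : Set (ternions F)) =
        {A : ternions F | A.val 0 0 = 0} := by
  rw [injective_smul_iff, ← mem_span_range_iff_exists_linearMap]
  exact forall_mul_eq_zero_and_one_notMem_iff.trans
    (SetLike.coe_set_eq (q := firstColumnZero)).symm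

/-- For a vector `X ∈ R^{n+1}`, the cyclic submodule `R·X` is free (i.e. `r ↦ r • X` is
injective) with `X` non-unimodular if and only if the right ideal generated by the
coordinates of `X` is the ideal `I₁` of ternions with zero first column. -/
theorem ternion_nonUnimodular_free_iff (F : Type) [Field F] (n : ℕ) (hn : 1 ≤ n)
    (X : Fin (n + 1) → ternions F) :
    (Function.Injective (fun r : ternions F => r • X) ∧
      ¬ ∃ φ : (Fin (n + 1) → ternions F) →ₗ[ternions F] ternions F, φ X = 1) ↔
      (Submodule.span (ternions F)ᵐᵒᵖ (Set.range X) : Set (ternions F)) =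
        {A : ternions F | A.val 0 0 = 0} :=
  ternion_nonUnimodular_free_iff_general F n X
end

section
/- Let F be a field, R the ring of ternions over F, and n ≥ 1. For every non-unimodular free cyclic submodule M of R^{n+1}, the image of M ∩ (rad R)^{n+1} under the coordinate bijection (rad R)^{n+1} → F^{n+1} (sending a tuple of strictly upper triangular matrices to the tuple of their top-right entries) is a 2-dimensional F-linear subspace of F^{n+1}. -/
set_option synthInstance.maxHeartbeats 1000000
set_option maxHeartbeats 1000000

namespace TernAux

variable {F : Type} [Field F]

lemma mem_iff (M : Matrix (Fin 2) (Fin 2) F) : M ∈ ternions F ↔ M 1 0 = 0 := Iff.rfl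

def tern (x y z : F) : ternions F :=
  ⟨!![x, y; 0, z], by rw [mem_iff]; simp⟩

@[simp] lemma tern_val (x y z : F) : (tern x y z).val = !![x, y; 0, z] := rfl

@[simp] lemma tern_val00 (x y z : F) : (tern x y z).val 0 0 = x := rfl
@[simp] lemma tern_val01 (x y z : F) : (tern x y z).val 0 1 = y := rfl
@[simp] lemma tern_val10 (x y z : F) : (tern x y z).val 1 0 = 0 := rfl
@[simp] lemma tern_val11 (x y z : F) : (tern x y z).val 1 1 = z := rfl

lemma val_mul (r s : ternions F) :
    ((r * s : ternions F) : Matrix (Fin 2) (Fin 2) F) = r.val * s.val := rfl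

lemma entries (r s : ternions F) :
    (r.val * s.val) 0 0 = r.val 0 0 * s.val 0 0 ∧
    (r.val * s.val) 0 1 = r.val 0 0 * s.val 0 1 + r.val 0 1 * s.val 1 1 ∧
    (r.val * s.val) 1 0 = 0 ∧
    (r.val * s.val) 1 1 = r.val 1 1 * s.val 1 1 := by
  have hr : r.val 1 0 = 0 := r.2
  have hs : s.val 1 0 = 0 := s.2
  refine ⟨?_, ?_, ?_, ?_⟩ <;> simp [Matrix.mul_apply, Fin.sum_univ_two, hr, hs]

end TernAux

open TernAux

/-- For every non-unimodular free cyclic submodule `M = R·X` of `R^{n+1}`, the image of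
`M ∩ (rad R)^{n+1}` under the coordinate bijection (sending a tuple of strictly upper
triangular matrices to the tuple of their top-right entries) is a `2`-dimensional
`F`-linear subspace of `F^{n+1}`. -/
theorem ternion_nonUnimodular_free_meets_rad_in_line (F : Type) [Field F] (n : ℕ)
    (hn : 1 ≤ n) (X : Fin (n + 1) → ternions F)
    (hfree : Function.Injective (fun r : ternions F => r • X))
    (hnu : ¬ ∃ φ : (Fin (n + 1) → ternions F) →ₗ[ternions F] ternions F, φ X = 1) :
    ∃ W : Submodule F (Fin (n + 1) → F), Module.finrank F W = 2 ∧
      (W : Set (Fin (n + 1) → F)) =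
        (fun v : Fin (n + 1) → ternions F => fun i => (v i).val 0 1) ''
          {v : Fin (n + 1) → ternions F | v ∈ Submodule.span (ternions F) {X} ∧
            ∀ i, (v i).val 0 0 = 0 ∧ (v i).val 1 1 = 0} := by
  classical
  have hsmul : ∀ (r : ternions F) (i : Fin (n+1)),
      ((r • X) i).val = r.val * (X i).val := fun r i => rfl
  -- freeness gives: some (X k).val 1 1 ≠ 0
  have hd : ∃ k, (X k).val 1 1 ≠ 0 := by
    by_contra h
    push_neg at h
    have h0 : (tern (F := F) 0 0 1) • X = (0 : ternions F) • X := by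
      rw [zero_smul]
      funext i
      apply Subtype.ext
      rw [show ((0 : Fin (n+1) → ternions F) i).val = 0 from rfl]
      rw [hsmul]
      obtain ⟨h1, h2, h3, h4⟩ := entries (tern (F := F) 0 0 1) (X i)
      rw [Matrix.eta_fin_two ((tern (F := F) 0 0 1).val * (X i).val), h1, h2, h3, h4]
      simp [h i]
      ext p q
      fin_cases p <;> fin_cases q <;> simp
    have h1 := hfree h0
    have h2 : (tern (F := F) 0 0 1).val 1 1 = (0 : ternions F).val 1 1 := by rw [h1]
    simp at h2
  obtain ⟨k, hk⟩ := hd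
  -- non-unimodularity gives: all (X j).val 0 0 = 0
  have ha : ∀ j, (X j).val 0 0 = 0 := by
    by_contra h
    push_neg at h
    obtain ⟨j, hj⟩ := h
    apply hnu
    set C : Fin (n+1) → ternions F := fun i =>
      tern (if i = j then ((X j).val 0 0)⁻¹ else 0)
           (if i = j then -(((X j).val 0 0)⁻¹ * ((X k).val 0 1 * ((X k).val 1 1)⁻¹)) else 0)
           (if i = k then ((X k).val 1 1)⁻¹ else 0) with hC_def
    refine ⟨{ toFun := fun v => ∑ i, v i * C i,
              map_add' := by
                intro x y
                simp [add_mul, Finset.sum_add_distrib]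
              map_smul' := by
                intro r v
                simp only [Pi.smul_apply, smul_eq_mul, RingHom.id_apply, mul_assoc,
                  Finset.mul_sum] }, ?_⟩
    apply Subtype.ext
    show ((∑ i, X i * C i : ternions F) : Matrix (Fin 2) (Fin 2) F) = ((1 : ternions F) : _)
    have hval : ((∑ i, X i * C i : ternions F) : Matrix (Fin 2) (Fin 2) F)
        = ∑ i, (X i).val * (C i).val := by
      rw [AddSubmonoidClass.coe_finset_sum]
      rfl
    rw [hval, OneMemClass.coe_one]
    have h00 : (∑ i, (X i).val * (C i).val) 0 0 = 1 := by
      rw [Matrix.sum_apply]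
      have heq : ∀ i ∈ Finset.univ, ((X i).val * (C i).val) 0 0
          = if i = j then (X i).val 0 0 * ((X j).val 0 0)⁻¹ else 0 := by
        intro i _
        rw [(entries (X i) (C i)).1]
        by_cases hij : i = j <;> simp [hC_def, hij]
      rw [Finset.sum_congr rfl heq, Finset.sum_ite_eq']
      simp [mul_inv_cancel₀ hj]
    have h01 : (∑ i, (X i).val * (C i).val) 0 1 = 0 := by
      rw [Matrix.sum_apply]
      have heq : ∀ i ∈ Finset.univ, ((X i).val * (C i).val) 0 1
          = (if i = j then (X i).val 0 0 *
               (-(((X j).val 0 0)⁻¹ * ((X k).val 0 1 * ((X k).val 1 1)⁻¹))) else 0)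
            + (if i = k then (X i).val 0 1 * ((X k).val 1 1)⁻¹ else 0) := by
        intro i _
        rw [(entries (X i) (C i)).2.1]
        by_cases hij : i = j <;> by_cases hik : i = k <;> simp [hC_def, hij, hik]
      rw [Finset.sum_congr rfl heq, Finset.sum_add_distrib,
        Finset.sum_ite_eq', Finset.sum_ite_eq']
      simp only [Finset.mem_univ, if_true]
      rw [mul_neg, ← mul_assoc, mul_inv_cancel₀ hj, one_mul, neg_add_cancel]
    have h10 : (∑ i, (X i).val * (C i).val) 1 0 = 0 := by
      rw [Matrix.sum_apply]
      have heq : ∀ i ∈ Finset.univ, ((X i).val * (C i).val) 1 0 = 0 := fun i _ =>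
        (entries (X i) (C i)).2.2.1
      rw [Finset.sum_congr rfl heq]
      simp
    have h11 : (∑ i, (X i).val * (C i).val) 1 1 = 1 := by
      rw [Matrix.sum_apply]
      have heq : ∀ i ∈ Finset.univ, ((X i).val * (C i).val) 1 1
          = if i = k then (X i).val 1 1 * ((X k).val 1 1)⁻¹ else 0 := by
        intro i _
        rw [(entries (X i) (C i)).2.2.2]
        by_cases hik : i = k <;> simp [hC_def, hik]
      rw [Finset.sum_congr rfl heq, Finset.sum_ite_eq']
      simp [mul_inv_cancel₀ hk]
    rw [Matrix.eta_fin_two (∑ i, (X i).val * (C i).val), h00, h01, h10, h11,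
      Matrix.one_fin_two]
  -- the two coordinate vectors
  have hindep : LinearIndependent F
      ![fun i => (X i).val 0 1, fun i => (X i).val 1 1] := by
    rw [LinearIndependent.pair_iff]
    intro s t hst
    have hsti : ∀ i, s * (X i).val 0 1 + t * (X i).val 1 1 = 0 := by
      intro i
      have := congrFun hst i
      simpa using this
    have h0 : (tern (F := F) s t 0) • X = (0 : ternions F) • X := by
      rw [zero_smul]
      funext i
      apply Subtype.ext
      rw [show ((0 : Fin (n+1) → ternions F) i).val = 0 from rfl]
      rw [hsmul]
      obtain ⟨h1, h2, h3, h4⟩ := entries (tern (F := F) s t 0) (X i)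
      rw [Matrix.eta_fin_two ((tern (F := F) s t 0).val * (X i).val), h1, h2, h3, h4]
      simp [ha i, hsti i]
      ext p q
      fin_cases p <;> fin_cases q <;> simp
    have h1 := hfree h0
    constructor
    · have h2 : (tern (F := F) s t 0).val 0 0 = (0 : ternions F).val 0 0 := by rw [h1]
      simpa using h2
    · have h2 : (tern (F := F) s t 0).val 0 1 = (0 : ternions F).val 0 1 := by rw [h1]
      simpa using h2
  refine ⟨Submodule.span F {fun i => (X i).val 0 1, fun i => (X i).val 1 1}, ?_, ?_⟩
  · have hr : ({fun i => (X i).val 0 1, fun i => (X i).val 1 1} : Set (Fin (n+1) → F))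
        = Set.range ![fun i => (X i).val 0 1, fun i => (X i).val 1 1] := by
      ext w
      constructor
      · rintro (rfl | rfl)
        · exact ⟨0, rfl⟩
        · exact ⟨1, rfl⟩
      · rintro ⟨i, rfl⟩
        fin_cases i
        · exact Or.inl rfl
        · exact Or.inr rfl
    rw [hr, finrank_span_eq_card hindep]
    simp
  · ext w
    simp only [SetLike.mem_coe, Submodule.mem_span_pair, Set.mem_image, Set.mem_setOf_eq]
    constructor
    · rintro ⟨x, y, rfl⟩
      refine ⟨(tern x y 0) • X,
        ⟨Submodule.smul_mem _ _ (Submodule.mem_span_singleton_self X), ?_⟩, ?_⟩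
      · intro i
        constructor
        · rw [hsmul, (entries (tern (F := F) x y 0) (X i)).1, ha i, mul_zero]
        · rw [hsmul, (entries (tern (F := F) x y 0) (X i)).2.2.2, tern_val11, zero_mul]
      · funext i
        rw [hsmul, (entries (tern (F := F) x y 0) (X i)).2.1, tern_val00, tern_val01]
        simp
    · rintro ⟨v, ⟨hv, hdiag⟩, rfl⟩
      obtain ⟨r, rfl⟩ := Submodule.mem_span_singleton.mp hv
      refine ⟨r.val 0 0, r.val 0 1, ?_⟩
      funext i
      rw [Pi.add_apply, Pi.smul_apply, Pi.smul_apply, smul_eq_mul, smul_eq_mul,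
        hsmul, (entries r (X i)).2.1]
end

section
/- Let F be a field, R the ring of ternions over F, and n ≥ 1. For every F-linear bijection f of F^{n+1} there exists A ∈ GL_{n+1}(R) such that, under the coordinate bijection (rad R)^{n+1} → F^{n+1}, the restriction of the map X ↦ X·A to (rad R)^{n+1} induces f; conversely, the restriction to (rad R)^{n+1} of the action of any A ∈ GL_{n+1}(R) induces an F-linear bijection of F^{n+1}. -/
open Matrix

section RightMatrix

variable {R : Type*} [Semiring R] {m : Type*} [Fintype m] [DecidableEq m]

theorem LinearEquiv.exists_units_matrix_vecMul_eq (f : (m → R) ≃ₗ[R] (m → R)) :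
    ∃ U : (Matrix m m R)ˣ, ∀ y, f y = y ᵥ* U.val := by
  refine ⟨⟨LinearMap.toMatrixRight' f.toLinearMap, LinearMap.toMatrixRight' f.symm.toLinearMap,
    ?_, ?_⟩, fun y => ?_⟩
  · rw [← LinearMap.toMatrixRight'_comp, LinearEquiv.comp_coe, LinearEquiv.self_trans_symm,
      LinearEquiv.refl_toLinearMap, LinearMap.toMatrixRight'_id]
  · rw [← LinearMap.toMatrixRight'_comp, LinearEquiv.comp_coe, LinearEquiv.symm_trans_self,
      LinearEquiv.refl_toLinearMap, LinearMap.toMatrixRight'_id]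
  · rw [← toLinearMapRight'_apply, toLinearMapRight', LinearEquiv.symm_apply_apply,
      LinearEquiv.coe_coe]

end RightMatrix

namespace ternions

variable (F : Type) [Field F]

def lowerRight : ternions F →+* F where
  toFun t := t.val 1 1
  map_one' := by simp
  map_mul' a b := by
    have ha : a.val 1 0 = 0 := a.2
    simp [mul_apply, Fin.sum_univ_two, ha]
  map_zero' := rfl
  map_add' _ _ := rfl

def scalar : F →+* ternions F :=
  (Matrix.scalar (Fin 2)).codRestrict (ternions F) fun a => by
    show Matrix.scalar (Fin 2) a 1 0 = 0
    simp

variable {F}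

theorem vecMul_val_zero_one {m : Type*} [Fintype m] (M : Matrix m m (ternions F))
    (v : m → ternions F) (hv : ∀ j, (v j).val 0 0 = 0) :
    (fun i => (vecMul v M i).val 0 1) = (fun j => (v j).val 0 1) ᵥ* M.map (lowerRight F) := by
  funext i
  simp only [vecMul, dotProduct, AddSubmonoidClass.coe_finsetSum, MulMemClass.coe_mul,
    Matrix.sum_apply, mul_apply, Fin.sum_univ_two, hv, zero_mul, zero_add, map_apply]
  rfl

theorem map_scalar_map_lowerRight {m n : Type*} (M : Matrix m n F) :
    (M.map (scalar F)).map (lowerRight F) = M := by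
  ext i j
  show Matrix.scalar (Fin 2) (M i j) 1 1 = M i j
  simp

end ternions

open ternions in
theorem ternion_GL_induces_all_linear_bijections_on_rad_general (F : Type) [Field F] (n : ℕ) :
    (∀ f : (Fin (n + 1) → F) ≃ₗ[F] (Fin (n + 1) → F),
      ∃ A : (Matrix (Fin (n + 1)) (Fin (n + 1)) (ternions F))ˣ,
        ∀ v : Fin (n + 1) → ternions F, (∀ i, (v i).val 0 0 = 0 ∧ (v i).val 1 1 = 0) →
          (fun i => (Matrix.vecMul v A.val i).val 0 1) = f (fun i => (v i).val 0 1)) ∧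
    (∀ A : (Matrix (Fin (n + 1)) (Fin (n + 1)) (ternions F))ˣ,
      ∃ f : (Fin (n + 1) → F) ≃ₗ[F] (Fin (n + 1) → F),
        ∀ v : Fin (n + 1) → ternions F, (∀ i, (v i).val 0 0 = 0 ∧ (v i).val 1 1 = 0) →
          (fun i => (Matrix.vecMul v A.val i).val 0 1) = f (fun i => (v i).val 0 1)) := by
  constructor
  · intro f
    obtain ⟨U, hU⟩ := f.exists_units_matrix_vecMul_eq
    refine ⟨Units.map (scalar F).mapMatrix.toMonoidHom U, fun v hv => ?_⟩
    rw [hU, vecMul_val_zero_one _ v fun j => (hv j).1]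
    exact congrArg _ (map_scalar_map_lowerRight U.val)
  · intro A
    let U := Units.map (lowerRight F).mapMatrix.toMonoidHom A
    exact ⟨toLinearEquivRight'OfInv U.inv_mul U.mul_inv,
      fun v hv => vecMul_val_zero_one _ v fun j => (hv j).1⟩

/-- The `F`-linear bijections of `(rad R)^{n+1} ≅ F^{n+1}` are precisely the restrictions
of the `R`-linear bijections `X ↦ X·A`, `A ∈ GL_{n+1}(R)`, of `R^{n+1}` to
`(rad R)^{n+1}`, read through the coordinate bijection `(rad R)^{n+1} → F^{n+1}`. -/
theorem ternion_GL_induces_all_linear_bijections_on_rad (F : Type) [Field F] (n : ℕ)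
    (hn : 1 ≤ n) :
    (∀ f : (Fin (n + 1) → F) ≃ₗ[F] (Fin (n + 1) → F),
      ∃ A : (Matrix (Fin (n + 1)) (Fin (n + 1)) (ternions F))ˣ,
        ∀ v : Fin (n + 1) → ternions F, (∀ i, (v i).val 0 0 = 0 ∧ (v i).val 1 1 = 0) →
          (fun i => (Matrix.vecMul v A.val i).val 0 1) = f (fun i => (v i).val 0 1)) ∧
    (∀ A : (Matrix (Fin (n + 1)) (Fin (n + 1)) (ternions F))ˣ,
      ∃ f : (Fin (n + 1) → F) ≃ₗ[F] (Fin (n + 1) → F),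
        ∀ v : Fin (n + 1) → ternions F, (∀ i, (v i).val 0 0 = 0 ∧ (v i).val 1 1 = 0) →
          (fun i => (Matrix.vecMul v A.val i).val 0 1) = f (fun i => (v i).val 0 1)) :=
  ternion_GL_induces_all_linear_bijections_on_rad_general F n
end

section
/- Let F = GF(q) be a finite field with q elements, R the ring of ternions over F, and n ≥ 1. The number of vectors X ∈ R^{n+1} whose coordinates generate as right ideal I_X exactly the Jacobson radical rad R equals q^{n+1} − 1. -/
set_option synthInstance.maxHeartbeats 1000000
set_option maxHeartbeats 1000000

section Aux
variable {F : Type} [Field F]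

lemma tern_lo (A : ternions F) : A.val 1 0 = 0 := A.property

lemma tern_mul_val (A B : ternions F) : ((A * B : ternions F) : Matrix (Fin 2) (Fin 2) F) = A.val * B.val := rfl

lemma tern_add_val (A B : ternions F) : ((A + B : ternions F) : Matrix (Fin 2) (Fin 2) F) = A.val + B.val := rfl

def radIdeal (F : Type) [Field F] : Submodule (ternions F)ᵐᵒᵖ (ternions F) where
  carrier := {A | A.val 0 0 = 0 ∧ A.val 1 1 = 0}
  zero_mem' := by simp
  add_mem' := by
    intro a b ha hb
    simp only [Set.mem_setOf_eq, tern_add_val, Matrix.add_apply] at *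
    exact ⟨by rw [ha.1, hb.1, add_zero], by rw [ha.2, hb.2, add_zero]⟩
  smul_mem' := by
    intro c x hx
    simp only [Set.mem_setOf_eq] at *
    rw [MulOpposite.smul_eq_mul_unop]
    constructor
    · show ((x * c.unop).val) 0 0 = 0
      rw [tern_mul_val, Matrix.mul_apply, Fin.sum_univ_two, hx.1, tern_lo]
      ring
    · show ((x * c.unop).val) 1 1 = 0
      rw [tern_mul_val, Matrix.mul_apply, Fin.sum_univ_two, hx.2, tern_lo]
      ring

def E (y : F) : ternions F := ⟨!![0, y; 0, 0], show (!![(0:F), y; 0, 0]) 1 0 = 0 by simp⟩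

lemma E_inj : Function.Injective (E (F := F)) := by
  intro a b h
  have := congrArg (fun A : ternions F => A.val 0 1) h
  simpa [E] using this

end Aux

section Main
variable {F : Type} [Field F]

lemma Xj_entries {X : ternions F} (hX : X ∈ radIdeal F) :
    X = E (X.val 0 1) := by
  apply Subtype.ext
  ext i k
  fin_cases i <;> fin_cases k <;>
    simp [E, hX.1, hX.2, tern_lo X]

lemma span_eq_rad_iff {n : ℕ} (X : Fin (n + 1) → ternions F) :
    Submodule.span (ternions F)ᵐᵒᵖ (Set.range X) = radIdeal F ↔
      (∀ i, X i ∈ radIdeal F) ∧ X ≠ 0 := by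
  constructor
  · intro h
    refine ⟨fun i => ?_, ?_⟩
    · rw [← h]; exact Submodule.subset_span ⟨i, rfl⟩
    · intro h0
      have h1 : (E (1 : F)) ∈ Submodule.span (ternions F)ᵐᵒᵖ (Set.range X) := by
        rw [h]
        constructor <;> simp [E]
      rw [h0] at h1
      have : Set.range (0 : Fin (n+1) → ternions F) ⊆ {0} := by
        rintro x ⟨i, rfl⟩; rfl
      have h2 := Submodule.span_le.2 (this.trans (by simp : ({0} : Set (ternions F)) ⊆ ↑(⊥ : Submodule (ternions F)ᵐᵒᵖ (ternions F))))
      have h3 := h2 h1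
      have : (1 : F) = 0 := by
        have := congrArg (fun A : ternions F => A.val 0 1) (Submodule.mem_bot _ |>.1 h3)
        simpa [E] using this
      exact one_ne_zero this
  · rintro ⟨h1, h2⟩
    apply le_antisymm
    · rw [Submodule.span_le]
      rintro x ⟨i, rfl⟩
      exact h1 i
    · obtain ⟨j, hj⟩ : ∃ j, X j ≠ 0 := by
        by_contra hc
        push_neg at hc
        exact h2 (funext hc)
      have hy : (X j).val 0 1 ≠ 0 := by
        intro h0
        apply hj
        rw [Xj_entries (h1 j), h0]
        apply Subtype.ext
        ext i k
        fin_cases i <;> fin_cases k <;> simp [E]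
      intro A hA
      set c : F := A.val 0 1 / (X j).val 0 1 with hc
      set r : ternions F := ⟨!![0, 0; 0, c], show (!![(0:F), 0; 0, c]) 1 0 = 0 by simp⟩ with hr
      have key : A = MulOpposite.op r • X j := by
        rw [MulOpposite.smul_eq_mul_unop]
        apply Subtype.ext
        ext i k
        rw [show (MulOpposite.op r).unop = r from rfl, tern_mul_val, Matrix.mul_apply, Fin.sum_univ_two]
        fin_cases i <;> fin_cases k <;>
          simp [hr, hA.1, hA.2, (h1 j).1, (h1 j).2, tern_lo A, tern_lo (X j), hc, mul_div_cancel₀ _ hy]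
      rw [key]
      exact Submodule.smul_mem _ _ (Submodule.subset_span ⟨j, rfl⟩)

end Main

/-- Over `F = GF(q)`, the number of vectors `X ∈ R^{n+1}` whose coordinates generate as
right ideal exactly the Jacobson radical `rad R = { (0 y; 0 0) }` equals `q^{n+1} - 1`. -/
theorem ternion_count_vectors_rad (F : Type) [Field F] [Fintype F] (q n : ℕ)
    (hq : Fintype.card F = q) (hn : 1 ≤ n) :
    Nat.card {X : Fin (n + 1) → ternions F //
        (Submodule.span (ternions F)ᵐᵒᵖ (Set.range X) : Set (ternions F)) =
          {A : ternions F | A.val 0 0 = 0 ∧ A.val 1 1 = 0}} = q ^ (n + 1) - 1 := by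
  have hset : ∀ X : Fin (n+1) → ternions F,
      ((Submodule.span (ternions F)ᵐᵒᵖ (Set.range X) : Set (ternions F)) =
        {A : ternions F | A.val 0 0 = 0 ∧ A.val 1 1 = 0}) ↔
      (∀ i, X i ∈ radIdeal F) ∧ X ≠ 0 := by
    intro X
    rw [← span_eq_rad_iff]
    exact ⟨fun h => SetLike.coe_injective h, fun h => congrArg SetLike.coe h⟩
  have e : {X : Fin (n + 1) → ternions F //
        (Submodule.span (ternions F)ᵐᵒᵖ (Set.range X) : Set (ternions F)) =
          {A : ternions F | A.val 0 0 = 0 ∧ A.val 1 1 = 0}} ≃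
      {y : Fin (n + 1) → F // y ≠ 0} := by
    refine ⟨fun X => ⟨fun i => (X.1 i).val 0 1, ?_⟩,
      fun y => ⟨fun i => E (y.1 i), ?_⟩, ?_, ?_⟩
    · obtain ⟨h1, h2⟩ := (hset X.1).1 X.2
      intro h0
      apply h2
      funext i
      have hi : (X.1 i).val 0 1 = 0 := congrFun h0 i
      rw [Xj_entries (h1 i), hi]
      apply Subtype.ext
      ext a b
      fin_cases a <;> fin_cases b <;> simp [E]
    · apply (hset _).2
      refine ⟨fun i => ⟨by simp [E], by simp [E]⟩, ?_⟩
      intro h0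
      apply y.2
      funext i
      have : E (y.1 i) = E (0 : F) := by
        rw [congrFun h0 i]
        apply Subtype.ext
        ext a b
        fin_cases a <;> fin_cases b <;> simp [E]
      exact E_inj this
    · intro X
      apply Subtype.ext
      funext i
      exact (Xj_entries (((hset X.1).1 X.2).1 i)).symm
    · intro y
      apply Subtype.ext
      funext i
      simp [E]
  classical
  rw [Nat.card_congr e, Nat.card_eq_fintype_card]
  have h1 : Fintype.card {y : Fin (n + 1) → F // ¬ y = 0} =
      Fintype.card (Fin (n + 1) → F) - Fintype.card {y : Fin (n + 1) → F // y = 0} :=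
    Fintype.card_subtype_compl _
  have h2 : Fintype.card {y : Fin (n + 1) → F // y = 0} = 1 := Fintype.card_subtype_eq 0
  have h3 : Fintype.card (Fin (n + 1) → F) = q ^ (n + 1) := by
    rw [Fintype.card_fun, hq, Fintype.card_fin]
  simp only [ne_eq]
  rw [h1, h2, h3]
end

section
/- Let F = GF(q) be a finite field with q elements, R the ring of ternions over F, and n ≥ 1. The number of vectors X ∈ R^{n+1} such that the right ideal I_X generated by the coordinates of X equals I₁(b:1) = { (0 zb; 0 z) : z ∈ F } for some b ∈ F is exactly q·(q^{n+1} − 1). -/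
set_option synthInstance.maxHeartbeats 1000000
set_option maxHeartbeats 1000000

namespace TernAux

variable (F : Type) [Field F]

/-- The right ideal I₁(b:1) as a submodule over the opposite ring. -/
def Ib (b : F) : Submodule (ternions F)ᵐᵒᵖ (ternions F) where
  carrier := {A : ternions F | A.val 0 0 = 0 ∧ ∃ z : F, A.val 0 1 = z * b ∧ A.val 1 1 = z}
  zero_mem' := ⟨by simp, 0, by simp, by simp⟩
  add_mem' := by
    rintro A B ⟨hA0, zA, hA1, hA2⟩ ⟨hB0, zB, hB1, hB2⟩
    refine ⟨?_, zA + zB, ?_, ?_⟩ <;>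
      simp [Matrix.add_apply, hA0, hB0, hA1, hB1, hA2, hB2, add_mul]
  smul_mem' := by
    rintro c A ⟨h0, z, h1, h2⟩
    have h10 : A.val 1 0 = 0 := A.2
    have hc10 : (c.unop).val 1 0 = 0 := c.unop.2
    have hs : c • A = A * c.unop := rfl
    refine ⟨?_, z * (c.unop).val 1 1, ?_, ?_⟩
    · simp [hs, Matrix.mul_apply, Fin.sum_univ_two, h0, h10, hc10]
    · simp only [hs, MulMemClass.coe_mul, Matrix.mul_apply, Fin.sum_univ_two, h0, h1]
      ring
    · simp [hs, Matrix.mul_apply, Fin.sum_univ_two, h10, h2]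

lemma key (b : F) {n : ℕ} (X : Fin (n + 1) → ternions F) :
    (Submodule.span (ternions F)ᵐᵒᵖ (Set.range X) : Set (ternions F)) =
      {A : ternions F | A.val 0 0 = 0 ∧ ∃ z : F, A.val 0 1 = z * b ∧ A.val 1 1 = z} ↔
    (∀ i, X i ∈ Ib F b) ∧ X ≠ 0 := by
  have hset : {A : ternions F | A.val 0 0 = 0 ∧ ∃ z : F, A.val 0 1 = z * b ∧ A.val 1 1 = z}
      = (Ib F b : Set (ternions F)) := rfl
  rw [hset, SetLike.coe_set_eq]
  constructor
  · intro h
    constructor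
    · intro i
      rw [← h]
      exact Submodule.subset_span (Set.mem_range_self i)
    · rintro rfl
      have hr : Set.range (0 : Fin (n + 1) → ternions F) = {0} := by
        ext A; simp [eq_comm]
      rw [hr, Submodule.span_zero_singleton] at h
      have hW : (⟨!![0, b; 0, 1], by show _ = (0:F); simp⟩ : ternions F) ∈ Ib F b :=
        ⟨by simp, 1, by simp, by simp⟩
      rw [← h, Submodule.mem_bot] at hW
      have := congrArg (fun A : ternions F => A.val 1 1) hW
      simp at this
  · rintro ⟨h1, h2⟩
    refine le_antisymm (Submodule.span_le.mpr ?_) ?_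
    · rintro _ ⟨i, rfl⟩; exact h1 i
    · obtain ⟨j, hj⟩ := Function.ne_iff.mp h2
      obtain ⟨h0, w, hw1, hw2⟩ := h1 j
      have h10 : (X j).val 1 0 = 0 := (X j).2
      have hXj : (X j).val = !![0, w * b; 0, w] := by
        ext a k
        fin_cases a <;> fin_cases k <;> simp_all
      have hw : w ≠ 0 := by
        rintro rfl
        apply hj
        apply Subtype.ext
        rw [hXj]
        ext a k
        fin_cases a <;> fin_cases k <;> simp
      rintro A ⟨hA0, z, hA1, hA2⟩
      have hA10 : A.val 1 0 = 0 := A.2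
      have hAval : A.val = !![0, z * b; 0, z] := by
        ext a k
        fin_cases a <;> fin_cases k <;> simp_all
      set r : ternions F := ⟨!![w⁻¹ * z, 0; 0, w⁻¹ * z], by show _ = (0:F); simp⟩ with hr
      have hAeq : A = MulOpposite.op r • X j := by
        apply Subtype.ext
        show A.val = (X j).val * r.val
        rw [hAval, hXj]
        show _ = _ * !![w⁻¹ * z, 0; 0, w⁻¹ * z]
        ext a k
        fin_cases a <;> fin_cases k <;>
          simp [Matrix.mul_apply, Fin.sum_univ_two]
        all_goals field_simp
        all_goals ring
      rw [hAeq]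
      exact Submodule.smul_mem _ _ (Submodule.subset_span ⟨j, rfl⟩)

end TernAux

/-- Over `F = GF(q)`, the number of vectors `X ∈ R^{n+1}` whose coordinates generate as
right ideal exactly `I₁(b:1) = { (0 zb; 0 z) : z ∈ F }` for some `b ∈ F` equals
`q·(q^{n+1} - 1)`. -/
theorem ternion_count_vectors_I1b1 (F : Type) [Field F] [Fintype F] (q n : ℕ)
    (hq : Fintype.card F = q) (hn : 1 ≤ n) :
    Nat.card {X : Fin (n + 1) → ternions F // ∃ b : F,
        (Submodule.span (ternions F)ᵐᵒᵖ (Set.range X) : Set (ternions F)) =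
          {A : ternions F | A.val 0 0 = 0 ∧ ∃ z : F, A.val 0 1 = z * b ∧ A.val 1 1 = z}} =
      q * (q ^ (n + 1) - 1) := by
  classical
  have hmem : ∀ (z b : F), (!![0, z * b; 0, z] : Matrix (Fin 2) (Fin 2) F) ∈ ternions F := by
    intro z b; show _ = (0:F); simp
  let f : F × {z : Fin (n + 1) → F // z ≠ 0} → {X : Fin (n + 1) → ternions F // ∃ b : F,
      (Submodule.span (ternions F)ᵐᵒᵖ (Set.range X) : Set (ternions F)) =
        {A : ternions F | A.val 0 0 = 0 ∧ ∃ z : F, A.val 0 1 = z * b ∧ A.val 1 1 = z}} :=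
    fun p =>
    ⟨fun i => ⟨!![0, p.2.1 i * p.1; 0, p.2.1 i], hmem _ _⟩, by
      refine ⟨p.1, (TernAux.key F p.1 _).mpr ⟨fun i => ⟨by simp, p.2.1 i, by simp, by simp⟩, ?_⟩⟩
      intro h
      obtain ⟨i, hi⟩ := Function.ne_iff.mp p.2.2
      have := congrArg (fun Y => (Y i).val 1 1) h
      simp at this
      exact hi this⟩
  have hbij : Function.Bijective f := by
    constructor
    · rintro ⟨b, z, hz⟩ ⟨b', z', hz'⟩ h
      have h' : ∀ i, (!![0, z i * b; 0, z i] : Matrix (Fin 2) (Fin 2) F)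
          = !![0, z' i * b'; 0, z' i] := by
        intro i
        exact congrArg Subtype.val (congrFun (congrArg Subtype.val h) i)
      have hzz : z = z' := by
        funext i
        have := congrFun (congrFun (h' i) 1) 1
        simpa using this
      obtain ⟨i, hi⟩ := Function.ne_iff.mp hz
      have hb : z i * b = z' i * b' := by
        have := congrFun (congrFun (h' i) 0) 1
        simpa using this
      rw [← hzz] at hb
      have hbb : b = b' := mul_left_cancel₀ hi hb
      simp [Prod.ext_iff, hzz, hbb]
    · rintro ⟨X, b, hb⟩
      rw [TernAux.key] at hb
      obtain ⟨hmemX, hX0⟩ := hb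
      have hz : (fun i => (X i).val 1 1) ≠ (0 : Fin (n + 1) → F) := by
        intro h
        apply hX0
        funext i
        obtain ⟨h0, w, hw1, hw2⟩ := hmemX i
        have h10 : (X i).val 1 0 = 0 := (X i).2
        have hw0 : w = 0 := hw2.symm.trans (congrFun h i)
        apply Subtype.ext
        ext a k
        fin_cases a <;> fin_cases k <;> simp [h0, h10, hw1, hw2, hw0]
      refine ⟨⟨b, ⟨fun i => (X i).val 1 1, hz⟩⟩, ?_⟩
      apply Subtype.ext
      funext i
      obtain ⟨h0, w, hw1, hw2⟩ := hmemX i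
      have h10 : (X i).val 1 0 = 0 := (X i).2
      apply Subtype.ext
      show (!![0, (X i).val 1 1 * b; 0, (X i).val 1 1] : Matrix (Fin 2) (Fin 2) F) = (X i).val
      ext a k
      fin_cases a <;> fin_cases k <;> simp [h0, h10, hw1, hw2]
  have hcard := (Nat.card_eq_of_bijective f hbij).symm
  rw [hcard, Nat.card_prod, Nat.card_eq_fintype_card, Nat.card_eq_fintype_card, hq]
  have hS : Fintype.card {z : Fin (n + 1) → F // z ≠ 0} = q ^ (n + 1) - 1 := by
    simp [Fintype.card_subtype_compl, Fintype.card_fun, hq]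
  rw [hS]
end
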